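/- arXiv:2503.07023 — 5 statements merged into one kernel-verified Lean document; each statement's English description precedes it below -/
import Mathlib

section
/- If ω : [0,∞) → [0,∞) is continuous, increasing, with ω(0)=0 and satisfying ω(t²) ≤ B·ω(t) + B for all t ≥ 0 for some constant B > 1, then the associated sequences W^{[ξ]}_k := exp((1/ξ)·φ*(ξk)), where φ* is the Young conjugate of φ = ω ∘ exp, satisfy W^{[ξ]}_{2k} ≤ e^{1/ξ} · W^{[Bξ]}_k for all k ∈ ℕ and ξ > 0. -/
open Real Filter Set

/-- The Young conjugate of `phi = w ∘ exp`. -/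
noncomputable def youngStar (w : ℝ → ℝ) (t : ℝ) : ℝ :=
  sSup ((fun s => s * t - w (Real.exp s)) '' Set.Ici (0:ℝ))

/-- The associated weight sequences. -/
noncomputable def Wseq (w : ℝ → ℝ) (xi : ℝ) (k : ℕ) : ℝ :=
  Real.exp ((1/xi) * youngStar w (xi * k))

/-- `w` is a weight function: continuous, increasing on `[0,∞)`, nonnegative, `w 0 = 0`,
`w (2 t) = O(w t)`, `log t = o(w t)`, and `w ∘ exp` convex on `[0,∞)`. -/
structure IsWeightFunction (w : ℝ → ℝ) : Prop where
  cont : ContinuousOn w (Set.Ici 0)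
  mono : MonotoneOn w (Set.Ici 0)
  zero : w 0 = 0
  nonneg : ∀ t, 0 ≤ t → 0 ≤ w t
  growth : ∃ C > (0:ℝ), ∃ T : ℝ, ∀ t ≥ T, w (2*t) ≤ C * w t
  log_small : ∀ e > (0:ℝ), ∃ T : ℝ, ∀ t ≥ T, Real.log t ≤ e * w t
  convexOn : ConvexOn ℝ (Set.Ici 0) (fun s => w (Real.exp s))

lemma youngStar_bdd (w : ℝ → ℝ) (hw : IsWeightFunction w) (t : ℝ) (ht : 0 ≤ t) :
    BddAbove ((fun s => s * t - w (Real.exp s)) '' Set.Ici (0:ℝ)) := by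
  obtain ⟨T, hT⟩ := hw.log_small (1/(t+1)) (by positivity)
  set S := max (Real.log T) 0 with hS
  refine ⟨max (S * t) 0, ?_⟩
  rintro x ⟨s, hs, rfl⟩
  simp only [Set.mem_Ici] at hs
  by_cases h : s ≤ S
  · have h1 : 0 ≤ w (Real.exp s) := hw.nonneg _ (Real.exp_pos s).le
    have h2 : s * t ≤ S * t := mul_le_mul_of_nonneg_right h ht
    have : s * t - w (Real.exp s) ≤ S * t := by linarith
    exact this.trans (le_max_left _ _)
  · push_neg at h
    have hsT : T ≤ Real.exp s := by
      rcases le_or_gt T 0 with hT0 | hT0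
      · exact hT0.trans (Real.exp_pos s).le
      · have : Real.log T ≤ s := (le_max_left _ _).trans h.le
        calc T = Real.exp (Real.log T) := (Real.exp_log hT0).symm
          _ ≤ Real.exp s := Real.exp_le_exp.mpr this
    have hkey := hT _ hsT
    rw [Real.log_exp] at hkey
    -- s ≤ (1/(t+1)) * w (exp s), so w (exp s) ≥ s * (t+1)
    have ht1 : (0:ℝ) < t + 1 := by linarith
    have hws : s * (t+1) ≤ w (Real.exp s) := by
      have := mul_le_mul_of_nonneg_left hkey ht1.le
      rw [← mul_assoc, mul_one_div, div_self ht1.ne'] at this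
      linarith
    have hs0 : 0 ≤ s := le_trans (le_max_right _ _) h.le
    have : s * t - w (Real.exp s) ≤ -s := by nlinarith
    have : s * t - w (Real.exp s) ≤ 0 := by linarith
    exact this.trans (le_max_right _ _)

theorem stmt0 (w : ℝ → ℝ) (hw : IsWeightFunction w) (B : ℝ) (hB : 1 < B)
    (hrobust : ∀ t : ℝ, 0 ≤ t → w (t^2) ≤ B * w t + B) :
    ∀ (k : ℕ) (xi : ℝ), 0 < xi →
      Wseq w xi (2*k) ≤ Real.exp (1/xi) * Wseq w (B*xi) k := by
  intro k xi hxi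
  have hB0 : (0:ℝ) < B := lt_trans one_pos hB
  have hk0 : (0:ℝ) ≤ (k:ℝ) := Nat.cast_nonneg k
  have hC : BddAbove ((fun s => s * (B*xi*k) - w (Real.exp s)) '' Set.Ici (0:ℝ)) :=
    youngStar_bdd w hw _ (by positivity)
  -- key inequality
  have key : youngStar w (xi * ((2*k : ℕ) : ℝ)) ≤ 1 + (1/B) * youngStar w (B*xi*k) := by
    unfold youngStar
    apply csSup_le (Set.Nonempty.image _ ⟨0, le_refl 0⟩)
    rintro x ⟨s, hs, rfl⟩
    have hs' : (0:ℝ) ≤ s := hs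
    have hmem : (2*s) * (B*xi*k) - w (Real.exp (2*s)) ∈
        ((fun s => s * (B*xi*k) - w (Real.exp s)) '' Set.Ici (0:ℝ)) :=
      ⟨2*s, Set.mem_Ici.mpr (by linarith [hs']), rfl⟩
    have hc : (2*s) * (B*xi*k) - w (Real.exp (2*s)) ≤
        sSup ((fun s => s * (B*xi*k) - w (Real.exp s)) '' Set.Ici (0:ℝ)) :=
      le_csSup hC hmem
    have hphi : w (Real.exp (2*s)) ≤ B * w (Real.exp s) + B := by
      have h2 : Real.exp (2*s) = (Real.exp s)^2 := by
        rw [← Real.exp_nat_mul]; push_cast; ring_nf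
      rw [h2]
      exact hrobust _ (Real.exp_pos s).le
    have hcast : ((2*k : ℕ) : ℝ) = 2 * (k:ℝ) := by push_cast; ring
    rw [hcast]
    set M := sSup ((fun s => s * (B*xi*k) - w (Real.exp s)) '' Set.Ici (0:ℝ)) with hM
    have hBinv : B * (1/B) = 1 := mul_one_div_cancel hB0.ne'
    have h3 : B * (s * (xi * (2*(k:ℝ))) - w (Real.exp s)) ≤ B + M := by nlinarith [hc, hphi]
    have h4 : s * (xi * (2*(k:ℝ))) - w (Real.exp s) ≤ (B+M)/B :=
      (le_div_iff₀ hB0).mpr (by linarith)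
    have h5 : (B+M)/B = 1 + (1/B)*M := by field_simp
    linarith
  -- conclude
  unfold Wseq
  rw [← Real.exp_add]
  apply Real.exp_le_exp.mpr
  have h1 : (1/xi) * youngStar w (xi * ((2*k:ℕ):ℝ)) ≤
      (1/xi) * (1 + (1/B) * youngStar w (B*xi*k)) :=
    mul_le_mul_of_nonneg_left key (by positivity)
  have h2 : (1/xi) * (1 + (1/B) * youngStar w (B*xi*k)) =
      1/xi + (1/(B*xi)) * youngStar w (B*xi*k) := by
    rw [mul_add, mul_one]; ring
  rw [h2] at h1
  exact h1
end

section
/- Let ω be a weight function satisfying ω(t²) ≤ B·ω(t) + B for all t ≥ 0 with B > 1. Then for every integer a ≥ 2, choosing an integer p with a ≤ 2^p, the associated weight sequences satisfy W^{[ξ]}_{ak} ≤ e^{G/ξ} · W^{[B^p ξ]}_k for all k ∈ ℕ and ξ > 0, where G := B/(B−1). -/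
open Real Filter Set

lemma ys_nonempty (w : ℝ → ℝ) (t : ℝ) :
    ((fun s => s * t - w (Real.exp s)) '' Set.Ici (0:ℝ)).Nonempty :=
  ⟨_, ⟨0, Set.mem_Ici.2 le_rfl, rfl⟩⟩

lemma ys_bdd {w : ℝ → ℝ} (hw : IsWeightFunction w) {t : ℝ} (ht : 0 ≤ t) :
    BddAbove ((fun s => s * t - w (Real.exp s)) '' Set.Ici (0:ℝ)) := by
  obtain ⟨T, hT⟩ := hw.log_small (1/(t+1)) (by positivity)
  refine ⟨max (Real.log T) 0 * t, ?_⟩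
  rintro x ⟨s, hs, rfl⟩
  simp only [mem_Ici] at hs
  have hC : 0 ≤ max (Real.log T) 0 * t := mul_nonneg (le_max_right _ _) ht
  dsimp only
  by_cases h : T ≤ Real.exp s
  · have h1 := hT _ h
    rw [Real.log_exp] at h1
    have h2 : s * (t+1) ≤ w (Real.exp s) := by
      rw [one_div, inv_mul_eq_div, le_div_iff₀ (by linarith : (0:ℝ) < t+1)] at h1
      exact h1
    nlinarith [h2, hs, hC]
  · push_neg at h
    have hsT : s ≤ Real.log T := by
      have := Real.log_lt_log (Real.exp_pos s) h
      rw [Real.log_exp] at this; exact this.le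
    have hwn : 0 ≤ w (Real.exp s) := hw.nonneg _ (Real.exp_pos s).le
    have : s * t ≤ max (Real.log T) 0 * t :=
      mul_le_mul_of_nonneg_right (hsT.trans (le_max_left _ _)) ht
    linarith

lemma ys_mono {w : ℝ → ℝ} (hw : IsWeightFunction w) {t1 t2 : ℝ} (h1 : 0 ≤ t1)
    (h12 : t1 ≤ t2) : youngStar w t1 ≤ youngStar w t2 := by
  have h2 : 0 ≤ t2 := le_trans h1 h12
  refine csSup_le (ys_nonempty w t1) ?_
  rintro x ⟨s, hs, rfl⟩
  simp only [mem_Ici] at hs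
  have : s * t1 - w (Real.exp s) ≤ s * t2 - w (Real.exp s) := by
    have := mul_le_mul_of_nonneg_left h12 hs; linarith
  exact this.trans (le_csSup (ys_bdd hw h2) ⟨s, hs, rfl⟩)

lemma ys_key {w : ℝ → ℝ} (hw : IsWeightFunction w) {B : ℝ} (hB : 1 < B)
    (hrobust : ∀ t : ℝ, 0 ≤ t → w (t^2) ≤ B * w t + B) {t : ℝ} (ht : 0 ≤ t) :
    youngStar w (2*t) ≤ (1/B) * youngStar w (B*t) + 1 := by
  have hB0 : (0:ℝ) < B := lt_trans one_pos hB
  refine csSup_le (ys_nonempty w _) ?_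
  rintro x ⟨s, hs, rfl⟩
  simp only [mem_Ici] at hs
  have hmem : (2*s)*(B*t) - w (Real.exp (2*s)) ≤ youngStar w (B*t) :=
    le_csSup (ys_bdd hw (mul_nonneg hB0.le ht)) ⟨2*s, by simp [mem_Ici]; linarith, rfl⟩
  have hrob : w (Real.exp (2*s)) ≤ B * w (Real.exp s) + B := by
    have he : Real.exp (2*s) = (Real.exp s)^2 := by
      rw [sq, ← Real.exp_add]; ring_nf
    rw [he]; exact hrobust _ (Real.exp_pos s).le
  have h1 : (1/B) * ((2*s)*(B*t) - w (Real.exp (2*s))) ≤ (1/B) * youngStar w (B*t) :=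
    mul_le_mul_of_nonneg_left hmem (by positivity)
  have hc : (1/B) * B = 1 := by field_simp
  have h3 : (1/B) * w (Real.exp (2*s)) ≤ w (Real.exp s) + 1 := by
    rw [one_div, inv_mul_eq_div, div_le_iff₀ hB0]
    nlinarith [hrob]
  have hx : (1/B) * ((2*s)*(B*t) - w (Real.exp (2*s)))
      = 2*s*t - (1/B) * w (Real.exp (2*s)) := by
    field_simp
  have h2 : s*(2*t) - w (Real.exp s) ≤ (1/B) * ((2*s)*(B*t) - w (Real.exp (2*s))) + 1 := by
    rw [hx]; nlinarith [h3]
  dsimp only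
  linarith

lemma ys_iter {w : ℝ → ℝ} (hw : IsWeightFunction w) {B : ℝ} (hB : 1 < B)
    (hrobust : ∀ t : ℝ, 0 ≤ t → w (t^2) ≤ B * w t + B) :
    ∀ (p : ℕ) (t : ℝ), 0 ≤ t →
      youngStar w (2^p * t) ≤ (1/B^p) * youngStar w (B^p * t)
        + ∑ i ∈ Finset.range p, (1/B)^i := by
  have hB0 : (0:ℝ) < B := lt_trans one_pos hB
  intro p
  induction p with
  | zero => intro t ht; simp
  | succ p ih =>
    intro t ht
    have h2t : (0:ℝ) ≤ 2*t := by linarith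
    have hstep := ih (2*t) h2t
    have hkey := ys_key hw hB hrobust (mul_nonneg (pow_nonneg hB0.le p) ht)
    calc youngStar w (2^(p+1) * t) = youngStar w (2^p * (2*t)) := by
          congr 1; ring
      _ ≤ (1/B^p) * youngStar w (B^p * (2*t)) + ∑ i ∈ Finset.range p, (1/B)^i := hstep
      _ = (1/B^p) * youngStar w (2*(B^p * t)) + ∑ i ∈ Finset.range p, (1/B)^i := by
          congr 2; ring
      _ ≤ (1/B^p) * ((1/B) * youngStar w (B*(B^p * t)) + 1) + ∑ i ∈ Finset.range p, (1/B)^i := by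
          have := mul_le_mul_of_nonneg_left hkey (by positivity : (0:ℝ) ≤ 1/B^p)
          linarith
      _ = (1/B^(p+1)) * youngStar w (B^(p+1) * t) + ∑ i ∈ Finset.range (p+1), (1/B)^i := by
          rw [Finset.sum_range_succ]
          have h1 : B*(B^p * t) = B^(p+1) * t := by ring
          rw [h1]
          have h2 : (1/B^p) * (1/B) = 1/B^(p+1) := by
            rw [pow_succ]; field_simp
          have h3 : ((1:ℝ)/B)^p = 1/B^p := by rw [div_pow, one_pow]
          rw [← h2, ← h3]; ring

theorem stmt1 (w : ℝ → ℝ) (hw : IsWeightFunction w) (B : ℝ) (hB : 1 < B)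
    (hrobust : ∀ t : ℝ, 0 ≤ t → w (t^2) ≤ B * w t + B)
    (a : ℕ) (ha : 2 ≤ a) (p : ℕ) (hp : a ≤ 2^p) :
    ∀ (k : ℕ) (xi : ℝ), 0 < xi →
      Wseq w xi (a*k) ≤ Real.exp ((B/(B-1))/xi) * Wseq w (B^p * xi) k := by
  intro k xi hxi
  have hB0 : (0:ℝ) < B := lt_trans one_pos hB
  have hBp : (0:ℝ) < B^p := pow_pos hB0 p
  unfold Wseq
  rw [← Real.exp_add, Real.exp_le_exp]
  -- reduce to an inequality on youngStar values
  have hk0 : (0:ℝ) ≤ (k:ℝ) := Nat.cast_nonneg k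
  have harg : xi * ((a*k : ℕ):ℝ) ≤ 2^p * (xi * k) := by
    push_cast
    have h1 : (a:ℝ) ≤ 2^p := by exact_mod_cast hp
    have h2 : (a:ℝ) * k ≤ 2^p * k := mul_le_mul_of_nonneg_right h1 hk0
    have h3 := mul_le_mul_of_nonneg_left h2 hxi.le
    nlinarith [h3]
  have h0 : (0:ℝ) ≤ xi * ((a*k : ℕ):ℝ) := mul_nonneg hxi.le (Nat.cast_nonneg _)
  have hmono : youngStar w (xi * ((a*k : ℕ):ℝ)) ≤ youngStar w (2^p * (xi * k)) :=
    ys_mono hw h0 harg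
  have hiter := ys_iter hw hB hrobust p (xi * k) (mul_nonneg hxi.le hk0)
  have hgeo : ∑ i ∈ Finset.range p, ((1:ℝ)/B)^i ≤ B/(B-1) := by
    have hhs := hasSum_geometric_of_lt_one (by positivity : (0:ℝ) ≤ 1/B)
      (by rw [div_lt_one hB0]; linarith)
    have h1 : ∑ i ∈ Finset.range p, ((1:ℝ)/B)^i ≤ (1 - 1/B)⁻¹ :=
      sum_le_hasSum (Finset.range p) (fun i _ => by positivity) hhs
    have h2 : ((1:ℝ) - 1/B)⁻¹ = B/(B-1) := by
      rw [one_sub_div (ne_of_gt hB0), inv_div]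
    linarith [h2 ▸ h1]
  have hArg2 : B^p * (xi * (k:ℝ)) = B^p * xi * (k:ℝ) := by ring
  rw [hArg2] at hiter
  have hchain : youngStar w (xi * ((a*k : ℕ):ℝ))
      ≤ (1/B^p) * youngStar w (B^p * xi * k) + B/(B-1) := by
    calc youngStar w (xi * ((a*k : ℕ):ℝ)) ≤ youngStar w (2^p * (xi * k)) := hmono
      _ ≤ (1/B^p) * youngStar w (B^p * xi * k) + ∑ i ∈ Finset.range p, (1/B)^i := hiter
      _ ≤ _ := by linarith
  have hmul := mul_le_mul_of_nonneg_left hchain (by positivity : (0:ℝ) ≤ 1/xi)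
  have e1 : (1/xi) * (B/(B-1)) = (B/(B-1))/xi := by
    rw [div_eq_mul_one_div (B/(B-1)) xi, mul_comm]
  have e2 : (1/xi) * ((1/B^p) * youngStar w (B^p * xi * k))
      = (1/(B^p * xi)) * youngStar w (B^p * xi * k) := by
    rw [← mul_assoc, one_div_mul_one_div, mul_comm xi (B^p)]
  have heq : (1/xi) * ((1/B^p) * youngStar w (B^p * xi * k) + B/(B-1))
      = (B/(B-1))/xi + (1/(B^p * xi)) * youngStar w (B^p * xi * k) := by
    rw [mul_add, e2, e1, add_comm]
  linarith [heq ▸ hmul]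
end

section
/- Let X₁ ⊆ ℝ^{d₁} and X₂ ⊆ ℝ^{d₂} be simple sets, i.e., each point x ∈ X_i has a neighborhood basis 𝒰 in X_i such that the intersection of each basis element with the interior X_i° is connected. Then the product X₁ × X₂ is simple. -/
/-- `X` is simple: every `x ∈ X` has a basis of neighborhoods `U` in `X` such that
`interior X ∩ U` is connected. -/
def IsSimple {E : Type*} [TopologicalSpace E] (X : Set E) : Prop :=
  ∀ x ∈ X, ∀ V ∈ nhdsWithin x X, ∃ U ∈ nhdsWithin x X,
    U ⊆ V ∧ IsConnected (interior X ∩ U)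

/-- The product of two simple sets is simple. -/
theorem stmt8 {d1 d2 : ℕ} (X1 : Set (Fin d1 → ℝ)) (X2 : Set (Fin d2 → ℝ))
    (h1 : IsSimple X1) (h2 : IsSimple X2) :
    IsSimple (X1 ×ˢ X2) := by
  intro x hx V hV
  rw [nhdsWithin_prod_eq] at hV
  obtain ⟨V1, hV1, V2, hV2, hVsub⟩ := Filter.mem_prod_iff.mp hV
  obtain ⟨U1, hU1, hU1V, hU1c⟩ := h1 x.1 hx.1 V1 hV1
  obtain ⟨U2, hU2, hU2V, hU2c⟩ := h2 x.2 hx.2 V2 hV2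
  refine ⟨U1 ×ˢ U2, ?_, ?_, ?_⟩
  · rw [nhdsWithin_prod_eq]
    exact Filter.prod_mem_prod hU1 hU2
  · exact fun p hp => hVsub ⟨hU1V hp.1, hU2V hp.2⟩
  · rw [interior_prod_eq, Set.prod_inter_prod]
    exact hU1c.prod hU2c
end

section
/- Let E be a Banach space, c : ℝ → E, and suppose c is given in the form c(t) = ∑_j φ((t−t_j)/T_j)·c_j(t−t_j), where the intervals {t : |t−t_j| ≤ T_j/2} are pairwise disjoint, φ : ℝ → [0,1] is smooth with support in [−1/2, 1/2], and each c_j : ℝ → E is smooth. Assume there exist constants R, C, ρ ≥ 1 and positive sequences (λ_j), (L_ℓ), (M_ℓ) such that ‖c_j^{(ℓ)}(t)‖ ≤ R·λ_j for |t| ≤ 1/2 and all ℓ, ‖φ^{(i)}‖_∞ ≤ C·ρ^i·L_i where (L_i) is increasing, and λ_j·L_ℓ/T_j^ℓ ≤ M_ℓ for all j, ℓ. Then for every t with |t − t_j| ≤ T_j/2 and every ℓ ∈ ℕ: ‖c^{(ℓ)}(t)‖ ≤ C·R·(2ρ)^ℓ·M_ℓ. -/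
open Filter Topology Asymptotics

set_option linter.unusedSectionVars false
set_option maxHeartbeats 1000000

section aux
variable {E : Type*} [NormedAddCommGroup E] [NormedSpace ℝ E]

lemma stmt12_aux_single {t T : ℕ → ℝ}
    (hdisj : Pairwise (Function.onFun Disjoint
      (fun j => Set.Icc (t j - T j / 2) (t j + T j / 2))))
    (D : ℕ → ℝ → E) (hsupp : ∀ i u, T i / 2 ≤ |u - t i| → D i u = 0)
    {v : ℝ} {i : ℕ} (hv : |v - t i| ≤ T i / 2) :
    ∑' i', D i' v = D i v := by
  refine tsum_eq_single i fun i' hne => ?_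
  refine hsupp i' v ?_
  by_contra h
  push_neg at h
  have h1 : v ∈ Set.Icc (t i - T i/2) (t i + T i/2) := by
    rw [Set.mem_Icc]
    constructor <;> [linarith [(abs_le.1 hv).1]; linarith [(abs_le.1 hv).2]]
  have h2 : v ∈ Set.Icc (t i' - T i'/2) (t i' + T i'/2) := by
    rw [Set.mem_Icc]
    constructor <;> [linarith [(abs_le.1 h.le).1]; linarith [(abs_le.1 h.le).2]]
  exact Set.disjoint_left.1 (hdisj hne) h2 h1

lemma stmt12_aux_zero {t T : ℕ → ℝ}
    (D : ℕ → ℝ → E) (hsupp : ∀ i u, T i / 2 ≤ |u - t i| → D i u = 0)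
    {v : ℝ} (hv : ∀ i, T i / 2 ≤ |v - t i|) :
    ∑' i', D i' v = 0 := by
  have : (fun i => D i v) = fun _ => 0 := funext fun i => hsupp i v (hv i)
  rw [this, tsum_zero]

lemma stmt12_aux_deriv {t T : ℕ → ℝ} (hT : ∀ j, 0 < T j)
    (hdisj : Pairwise (Function.onFun Disjoint
      (fun j => Set.Icc (t j - T j / 2) (t j + T j / 2))))
    (D : ℕ → ℕ → ℝ → E) (B : ℕ → ℝ)
    (hderiv : ∀ i m u, HasDerivAt (D i m) (D i (m+1) u) u)
    (hsupp : ∀ i m u, T i / 2 ≤ |u - t i| → D i m u = 0)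
    (hbd : ∀ i m u, ‖D i m u‖ ≤ B m) :
    ∀ l u, HasDerivAt (fun v => ∑' i, D i l v) (∑' i, D i (l+1) u) u := by
  intro l u
  by_cases hu : ∃ i, |u - t i| < T i / 2
  · obtain ⟨i, hi⟩ := hu
    have hIoo : Set.Ioo (t i - T i/2) (t i + T i/2) ∈ 𝓝 u := by
      refine Ioo_mem_nhds ?_ ?_
      · linarith [(abs_lt.1 hi).1]
      · linarith [(abs_lt.1 hi).2]
    have hev : (fun v => ∑' i', D i' l v) =ᶠ[𝓝 u] D i l := by
      filter_upwards [hIoo] with v hv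
      refine stmt12_aux_single hdisj (fun i' => D i' l) (fun i' w h => hsupp i' l w h) ?_
      rw [Set.mem_Ioo] at hv
      rw [abs_le]
      constructor <;> [linarith [hv.1]; linarith [hv.2]]
    rw [stmt12_aux_single hdisj (fun i' => D i' (l+1)) (fun i' w h => hsupp i' (l+1) w h) hi.le]
    exact (hderiv i l u).congr_of_eventuallyEq hev
  · push_neg at hu
    have hu' : ∀ i, T i / 2 ≤ |u - t i| := fun i => hu i
    have h0 : (0:ℝ) ≤ B (l+2) := (norm_nonneg _).trans (hbd 0 (l+2) 0)
    have key : ∀ v, ‖∑' i, D i l v‖ ≤ B (l+2) * |v - u| * |v - u| := by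
      intro v
      by_cases hv : ∃ i, |v - t i| ≤ T i / 2
      · obtain ⟨i, hvi⟩ := hv
        rw [stmt12_aux_single hdisj (fun i' => D i' l) (fun i' w h => hsupp i' l w h) hvi]
        set e : ℝ := if u ≤ t i then t i - T i / 2 else t i + T i / 2 with he
        have hesupp : T i / 2 ≤ |e - t i| := by
          rcases le_or_gt u (t i) with h | h
          · rw [he, if_pos h]
            have : t i - T i/2 - t i = -(T i/2) := by ring
            rw [this, abs_neg, abs_of_nonneg (by linarith [hT i])]
          · rw [he, if_neg (not_le.mpr h)]
            have : t i + T i/2 - t i = T i/2 := by ring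
            rw [this, abs_of_nonneg (by linarith [hT i])]
        have hve : |v - e| ≤ |v - u| := by
          have hv1 := (abs_le.1 hvi).1
          have hv2 := (abs_le.1 hvi).2
          rcases le_or_gt u (t i) with h | h
          · have h1 : T i/2 ≤ t i - u := by
              have := hu' i
              rwa [abs_sub_comm, abs_of_nonneg (by linarith)] at this
            rw [he, if_pos h]
            rw [abs_of_nonneg (by linarith), abs_of_nonneg (by linarith)]
            linarith
          · have h1 : T i/2 ≤ u - t i := by
              have := hu' i
              rwa [abs_of_nonneg (by linarith)] at this
            rw [he, if_neg (not_le.mpr h)]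
            rw [abs_of_nonpos (by linarith), abs_of_nonpos (by linarith)]
            linarith
        have inner : ∀ w, ‖D i (l+1) w‖ ≤ B (l+2) * ‖w - e‖ := by
          intro w
          have hm := Convex.norm_image_sub_le_of_norm_hasDerivWithin_le (s := (Set.univ : Set ℝ))
            (f := D i (l+1)) (f' := D i (l+2))
            (fun x _ => (hderiv i (l+1) x).hasDerivWithinAt)
            (fun x _ => hbd i (l+2) x) convex_univ (Set.mem_univ e) (Set.mem_univ w)
          rwa [hsupp i (l+1) e hesupp, sub_zero] at hm
        have habs : ∀ x ∈ Set.uIcc e v, ‖x - e‖ ≤ ‖v - e‖ := by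
          intro x hx
          rcases le_total e v with h | h
          · rw [Set.uIcc_of_le h] at hx
            rw [Real.norm_eq_abs, Real.norm_eq_abs,
              abs_of_nonneg (by linarith [hx.1]), abs_of_nonneg (by linarith)]
            linarith [hx.2]
          · rw [Set.uIcc_of_ge h] at hx
            rw [Real.norm_eq_abs, Real.norm_eq_abs,
              abs_of_nonpos (by linarith [hx.2]), abs_of_nonpos (by linarith)]
            linarith [hx.1]
        have outer : ‖D i l v - D i l e‖ ≤ B (l+2) * ‖v - e‖ * ‖v - e‖ :=
          Convex.norm_image_sub_le_of_norm_hasDerivWithin_le (s := Set.uIcc e v)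
            (f := D i l) (f' := D i (l+1))
            (fun x _ => (hderiv i l x).hasDerivWithinAt)
            (fun x hx => (inner x).trans (by
              have := habs x hx
              gcongr))
            (convex_uIcc e v) Set.left_mem_uIcc Set.right_mem_uIcc
        rw [hsupp i l e hesupp, sub_zero] at outer
        refine outer.trans ?_
        simp only [Real.norm_eq_abs]
        gcongr <;> exact hve
      · push_neg at hv
        rw [stmt12_aux_zero (fun i' => D i' l) (fun i' w h => hsupp i' l w h)
          (fun i => (hv i).le)]
        rw [norm_zero]
        exact mul_nonneg (mul_nonneg h0 (abs_nonneg _)) (abs_nonneg _)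
    rw [stmt12_aux_zero (fun i' => D i' (l+1)) (fun i' w h => hsupp i' (l+1) w h) hu']
    rw [hasDerivAt_iff_isLittleO]
    have hglu : ∑' i, D i l u = 0 :=
      stmt12_aux_zero (fun i' => D i' l) (fun i' w h => hsupp i' l w h) hu'
    simp only [hglu, sub_zero, smul_zero]
    have hO : (fun v => ∑' i, D i l v) =O[𝓝 u] (fun v => (v - u) * (v - u)) := by
      refine IsBigO.of_bound (B (l+2)) (Filter.Eventually.of_forall fun v => ?_)
      rw [Real.norm_eq_abs, abs_mul]
      calc ‖∑' i, D i l v‖ ≤ B (l+2) * |v - u| * |v - u| := key v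
        _ = B (l+2) * (|v - u| * |v - u|) := by ring
    have ho : (fun v:ℝ => (v - u) * (v - u)) =o[𝓝 u] (fun v => v - u) := by
      have h1 : (fun v:ℝ => v - u) =o[𝓝 u] (fun _ => (1:ℝ)) := by
        rw [isLittleO_one_iff]
        have h2 : Filter.Tendsto (fun v:ℝ => v - u) (𝓝 u) (𝓝 (u - u)) :=
          tendsto_id.sub tendsto_const_nhds
        simpa using h2
      simpa using (isBigO_refl (fun v:ℝ => v - u) (𝓝 u)).mul_isLittleO h1
    exact hO.trans_isLittleO ho

end aux

theorem stmt12 {E : Type*} [NormedAddCommGroup E] [NormedSpace ℝ E] [CompleteSpace E]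
    (t T : ℕ → ℝ) (hT : ∀ j, T j ∈ Set.Ioc (0:ℝ) 1)
    (hdisj : Pairwise (Function.onFun Disjoint
      (fun j => Set.Icc (t j - T j / 2) (t j + T j / 2))))
    (phi : ℝ → ℝ) (hphi : ContDiff ℝ (⊤ : ℕ∞) phi)
    (hphi01 : ∀ s, phi s ∈ Set.Icc (0:ℝ) 1)
    (hphisupp : ∀ s : ℝ, 1/2 ≤ |s| → phi s = 0)
    (c : ℕ → ℝ → E) (hc : ∀ j, ContDiff ℝ (⊤ : ℕ∞) (c j))
    (R C rho : ℝ) (hR : 1 ≤ R) (hC : 1 ≤ C) (hrho : 1 ≤ rho)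
    (lam L M : ℕ → ℝ) (hlampos : ∀ j, 0 < lam j)
    (hLpos : ∀ i, 0 < L i) (hMpos : ∀ l, 0 < M l) (hLmono : Monotone L)
    (hcj : ∀ (j l : ℕ) (s : ℝ), |s| ≤ 1/2 → ‖iteratedDeriv l (c j) s‖ ≤ R * lam j)
    (hphibound : ∀ (i : ℕ) (s : ℝ), |iteratedDeriv i phi s| ≤ C * rho ^ i * L i)
    (hML : ∀ j l, lam j * L l / T j ^ l ≤ M l) :
    ∀ (j l : ℕ) (s : ℝ), |s - t j| ≤ T j / 2 →
      ‖iteratedDeriv l (fun u => ∑' i, phi ((u - t i) / T i) • c i (u - t i)) s‖ ≤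
        C * R * (2*rho)^l * M l := by
  intro j l s hs
  have hT0 : ∀ i, 0 < T i := fun i => (hT i).1
  have hC0 : (0:ℝ) < C := lt_of_lt_of_le one_pos hC
  have hR0 : (0:ℝ) < R := lt_of_lt_of_le one_pos hR
  have hrho0 : (0:ℝ) < rho := lt_of_lt_of_le one_pos hrho
  set term : ℕ → ℝ → E := fun i u => phi ((u - t i) / T i) • c i (u - t i) with hterm_def
  have htermsmooth : ∀ i, ContDiff ℝ (⊤:ℕ∞) (term i) := fun i =>
    (hphi.comp ((contDiff_id.sub contDiff_const).div_const _)).smul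
      ((hc i).comp (contDiff_id.sub contDiff_const))
  set D : ℕ → ℕ → ℝ → E := fun i m => iteratedDeriv m (term i) with hD_def
  have hderiv : ∀ i m u, HasDerivAt (D i m) (D i (m+1) u) u := by
    intro i m u
    have hdiff : Differentiable ℝ (D i m) :=
      (htermsmooth i).differentiable_iteratedDeriv m
        (by exact_mod_cast lt_top_iff_ne_top.mpr (ENat.coe_ne_top m))
    have hd : deriv (D i m) = D i (m+1) := by
      show deriv (iteratedDeriv m (term i)) = iteratedDeriv (m+1) (term i)
      exact iteratedDeriv_succ.symm
    have h2 := (hdiff u).hasDerivAt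
    rwa [hd] at h2
  have hsupp : ∀ i m u, T i / 2 ≤ |u - t i| → D i m u = 0 := by
    intro i m u hu
    have hopen : IsOpen {v : ℝ | T i / 2 < |v - t i|} :=
      isOpen_lt continuous_const ((continuous_id.sub continuous_const).abs)
    have hzeroOn : Set.EqOn (term i) (fun _ => (0:E)) {v : ℝ | T i / 2 < |v - t i|} := by
      intro v hv
      have hv' : T i / 2 < |v - t i| := hv
      have h2 : (1:ℝ)/2 ≤ |(v - t i)/T i| := by
        rw [abs_div, abs_of_pos (hT0 i), le_div_iff₀ (hT0 i)]
        linarith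
      show phi ((v - t i)/T i) • c i (v - t i) = 0
      rw [hphisupp _ h2, zero_smul]
    have hzfun : ∀ n : ℕ, iteratedDeriv n (fun _ : ℝ => (0:E)) = fun _ => 0 := by
      intro n
      induction n with
      | zero => simp
      | succ k ih => rw [iteratedDeriv_succ, ih]; funext x; simp
    have hzfun := hzfun m
    have hDOn : Set.EqOn (D i m) (iteratedDeriv m (fun _ => (0:E)))
        {v : ℝ | T i / 2 < |v - t i|} := hzeroOn.iteratedDeriv_of_isOpen hopen m
    have hcont : Continuous (D i m) :=
      (htermsmooth i).continuous_iteratedDeriv m (by exact_mod_cast le_top)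
    have hclosed : Set.EqOn (D i m) (iteratedDeriv m (fun _ : ℝ => (0:E)))
        (closure {v : ℝ | T i / 2 < |v - t i|}) :=
      hDOn.closure hcont (by rw [hzfun]; exact continuous_const)
    have hmem : u ∈ closure {v : ℝ | T i / 2 < |v - t i|} := by
      rcases le_or_gt (t i) u with h | h
      · have h1 : T i/2 ≤ u - t i := by rwa [abs_of_nonneg (by linarith)] at hu
        have hseq : Tendsto (fun n : ℕ => u + 1/(n+1)) atTop (𝓝 u) := by
          have h3 := tendsto_one_div_add_atTop_nhds_zero_nat (𝕜 := ℝ)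
          simpa using tendsto_const_nhds.add h3
        refine mem_closure_of_tendsto hseq (Filter.Eventually.of_forall fun n => ?_)
        show T i/2 < |u + 1/((n:ℝ)+1) - t i|
        have h2 : (0:ℝ) < 1/((n:ℝ)+1) := by positivity
        rw [abs_of_pos (by linarith [hT0 i])]
        linarith
      · have h1 : T i/2 ≤ t i - u := by
          rwa [abs_sub_comm, abs_of_nonneg (by linarith)] at hu
        have hseq : Tendsto (fun n : ℕ => u - 1/(n+1)) atTop (𝓝 u) := by
          have h3 := tendsto_one_div_add_atTop_nhds_zero_nat (𝕜 := ℝ)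
          simpa using tendsto_const_nhds.sub h3
        refine mem_closure_of_tendsto hseq (Filter.Eventually.of_forall fun n => ?_)
        show T i/2 < |u - 1/((n:ℝ)+1) - t i|
        have h2 : (0:ℝ) < 1/((n:ℝ)+1) := by positivity
        rw [abs_sub_comm, abs_of_pos (by linarith [hT0 i])]
        linarith
    have hfin := hclosed hmem
    rw [hzfun] at hfin
    exact hfin
  have hbd : ∀ i m u, ‖D i m u‖ ≤ C * R * (2*rho)^m * M m := by
    intro i m u
    by_cases hu : |u - t i| ≤ 1/2
    · have hf : ContDiff ℝ (⊤:ℕ∞) (fun u : ℝ => phi ((u - t i)/T i)) :=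
        hphi.comp ((contDiff_id.sub contDiff_const).div_const _)
      have hg : ContDiff ℝ (⊤:ℕ∞) (fun u : ℝ => c i (u - t i)) :=
        (hc i).comp (contDiff_id.sub contDiff_const)
      have hleib := norm_iteratedFDeriv_smul_le hf hg u
        (by exact_mod_cast le_top : ((m:ℕ) : WithTop ℕ∞) ≤ ((⊤:ℕ∞) : WithTop ℕ∞))
      have hTinv1 : 1 ≤ (T i)⁻¹ := by
        rw [← one_div, le_div_iff₀ (hT0 i)]
        have := (hT i).2
        linarith
      have hphik : ∀ (k : ℕ) (x : ℝ), iteratedDeriv k (fun u : ℝ => phi ((u - t i)/T i)) x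
          = ((T i)⁻¹) ^ k • iteratedDeriv k phi ((T i)⁻¹ * (x + -t i)) := by
        intro k x
        have hfeq : (fun u : ℝ => phi ((u - t i)/T i))
            = fun z : ℝ => (fun v : ℝ => phi ((T i)⁻¹ * v)) (z + -t i) := by
          funext z
          simp only []
          rw [← sub_eq_add_neg, div_eq_inv_mul]
        rw [hfeq, iteratedDeriv_comp_add_const k (fun v : ℝ => phi ((T i)⁻¹ * v)) (-t i),
          iteratedDeriv_comp_const_smul (hphi.of_le (m := k) (by exact_mod_cast le_top)) ((T i)⁻¹)]
      have hY : (0:ℝ) ≤ C * rho^m * L m :=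
        mul_nonneg (mul_nonneg hC0.le (pow_pos hrho0 m).le) (hLpos m).le
      have hfk : ∀ k, k ≤ m → ‖iteratedFDeriv ℝ k (fun u : ℝ => phi ((u - t i)/T i)) u‖
          ≤ C * rho^m * L m / T i^m := by
        intro k hk
        rw [norm_iteratedFDeriv_eq_norm_iteratedDeriv, hphik k u, norm_smul, norm_pow,
          Real.norm_eq_abs, Real.norm_eq_abs, abs_of_pos (inv_pos.mpr (hT0 i))]
        have hb2 : |iteratedDeriv k phi ((T i)⁻¹ * (u + -t i))| ≤ C * rho^m * L m := by
          refine (hphibound k _).trans ?_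
          have p1 : rho^k ≤ rho^m := pow_le_pow_right₀ hrho hk
          have p2 : L k ≤ L m := hLmono hk
          have s1 : C * rho^k ≤ C * rho^m := mul_le_mul_of_nonneg_left p1 hC0.le
          have s2 : C * rho^k * L k ≤ C * rho^m * L k :=
            mul_le_mul_of_nonneg_right s1 (hLpos k).le
          have s3 : C * rho^m * L k ≤ C * rho^m * L m :=
            mul_le_mul_of_nonneg_left p2 (mul_nonneg hC0.le (pow_pos hrho0 m).le)
          linarith
        have h3 : (T i)⁻¹ ^ k ≤ (T i)⁻¹ ^ m := pow_le_pow_right₀ hTinv1 hk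
        have h4 : (0:ℝ) ≤ (T i)⁻¹ ^ k := by positivity
        calc (T i)⁻¹ ^ k * |iteratedDeriv k phi ((T i)⁻¹ * (u + -t i))|
            ≤ (T i)⁻¹ ^ k * (C * rho^m * L m) := mul_le_mul_of_nonneg_left hb2 h4
          _ ≤ (T i)⁻¹ ^ m * (C * rho^m * L m) := mul_le_mul_of_nonneg_right h3 hY
          _ = C * rho^m * L m / T i^m := by
              rw [inv_pow, div_eq_mul_inv, mul_comm]
      have hgk : ∀ n : ℕ, ‖iteratedFDeriv ℝ n (fun u : ℝ => c i (u - t i)) u‖ ≤ R * lam i := by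
        intro n
        rw [norm_iteratedFDeriv_eq_norm_iteratedDeriv]
        have hceq : (fun u : ℝ => c i (u - t i)) = fun z : ℝ => c i (z + -t i) := by
          funext z; rw [sub_eq_add_neg]
        rw [hceq, iteratedDeriv_comp_add_const n (c i) (-t i)]
        exact hcj i n (u + -t i) (by rwa [← sub_eq_add_neg])
      have hn3 : (0:ℝ) ≤ C * rho^m * L m / T i^m :=
        div_nonneg hY (pow_pos (hT0 i) m).le
      calc ‖D i m u‖ = ‖iteratedFDeriv ℝ m (term i) u‖ :=
            (norm_iteratedFDeriv_eq_norm_iteratedDeriv).symm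
        _ ≤ ∑ k ∈ Finset.range (m+1), (m.choose k : ℝ)
            * ‖iteratedFDeriv ℝ k (fun u : ℝ => phi ((u - t i)/T i)) u‖
            * ‖iteratedFDeriv ℝ (m-k) (fun u : ℝ => c i (u - t i)) u‖ := hleib
        _ ≤ ∑ k ∈ Finset.range (m+1),
            (m.choose k : ℝ) * (C * rho^m * L m / T i^m) * (R * lam i) := by
            refine Finset.sum_le_sum fun k hk => ?_
            have hk' : k ≤ m := Nat.lt_succ_iff.mp (Finset.mem_range.mp hk)
            have b1 := hfk k hk'
            have b2 := hgk (m - k)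
            have n1 : (0:ℝ) ≤ (m.choose k : ℝ) := Nat.cast_nonneg _
            have step1 : (m.choose k : ℝ)
                * ‖iteratedFDeriv ℝ k (fun u : ℝ => phi ((u - t i)/T i)) u‖
                * ‖iteratedFDeriv ℝ (m-k) (fun u : ℝ => c i (u - t i)) u‖
                ≤ (m.choose k : ℝ) * (C * rho^m * L m / T i^m)
                * ‖iteratedFDeriv ℝ (m-k) (fun u : ℝ => c i (u - t i)) u‖ :=
              mul_le_mul_of_nonneg_right (mul_le_mul_of_nonneg_left b1 n1) (norm_nonneg _)
            have step2 : (m.choose k : ℝ) * (C * rho^m * L m / T i^m)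
                * ‖iteratedFDeriv ℝ (m-k) (fun u : ℝ => c i (u - t i)) u‖
                ≤ (m.choose k : ℝ) * (C * rho^m * L m / T i^m) * (R * lam i) :=
              mul_le_mul_of_nonneg_left b2 (mul_nonneg n1 hn3)
            linarith
        _ = (2:ℝ)^m * (C * rho^m * L m / T i^m * (R * lam i)) := by
            simp only [mul_assoc]
            rw [← Finset.sum_mul, ← Nat.cast_sum, Nat.sum_range_choose]
            push_cast
            ring
        _ ≤ C * R * (2*rho)^m * M m := by
            have h1 := hML i m
            have heq : (2:ℝ)^m * (C * rho^m * L m / T i^m * (R * lam i))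
                = C * R * (2*rho)^m * (lam i * L m / T i^m) := by
              rw [mul_pow]; ring
            rw [heq]
            have hA : (0:ℝ) ≤ C * R * (2*rho)^m :=
              mul_nonneg (mul_nonneg hC0.le hR0.le)
                (pow_pos (by linarith : (0:ℝ) < 2*rho) m).le
            exact mul_le_mul_of_nonneg_left h1 hA
    · have h1 : T i / 2 ≤ |u - t i| := by
        push_neg at hu
        have := (hT i).2
        linarith
      rw [hsupp i m u h1, norm_zero]
      exact mul_nonneg (mul_nonneg (mul_nonneg hC0.le hR0.le)
        (pow_pos (by linarith : (0:ℝ) < 2*rho) m).le) (hMpos m).le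
  have hiter : ∀ m : ℕ, iteratedDeriv m (fun u => ∑' i, phi ((u - t i) / T i) • c i (u - t i))
      = fun v => ∑' i, D i m v := by
    intro m
    induction m with
    | zero =>
      funext v
      simp only [iteratedDeriv_zero]
      refine tsum_congr fun i => ?_
      have hD0 : D i 0 = term i := iteratedDeriv_zero
      rw [hD0]
    | succ k ih =>
      rw [iteratedDeriv_succ, ih]
      funext v
      exact (stmt12_aux_deriv hT0 hdisj D (fun n => C * R * (2*rho)^n * M n)
        hderiv hsupp hbd k v).deriv
  rw [hiter l]
  show ‖∑' i, D i l s‖ ≤ C * R * (2*rho)^l * M l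
  rw [stmt12_aux_single hdisj (fun i' => D i' l) (fun i' w h => hsupp i' l w h) hs]
  exact hbd j l s
end

section
/- Let f : ℝ → ℝ be smooth and c(t) := x + t²·λ·v a curve in ℝ^d composed with a smooth function F : ℝ^d → ℝ, i.e., g(t) := F(x + t²·λ·v). Then for every k ∈ ℕ, g^{(2k)}(0) = ((2k)!/k!)·λ^k·d_v^k F(x), where d_v^k F denotes the k-th directional derivative of F in direction v. -/
def stmtA : ℕ → ℕ → ℕ
  | 0, 0 => 1
  | 0, _+1 => 0
  | n+1, 0 => 2 * stmtA n 0
  | n+1, i+1 => 2 * stmtA n (i+1) + (n - 2*i) * stmtA n i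

lemma stmtA_zero : ∀ n i, n < 2*i → stmtA n i = 0 := by
  intro n
  induction n with
  | zero => intro i hi; match i, hi with | i+1, _ => rfl
  | succ n ih =>
    intro i hi
    match i, hi with
    | i+1, hi =>
      have h1 : stmtA n (i+1) = 0 := ih _ (by omega)
      show 2 * stmtA n (i+1) + (n - 2*i) * stmtA n i = 0
      rcases Nat.lt_or_ge n (2*i) with h | h
      · rw [h1, ih _ (by omega)]; ring
      · have : n - 2*i = 0 := by omega
        rw [h1, this]; ring

lemma stmtA_fact : ∀ n i, 2*i ≤ n →
    stmtA n i * i.factorial * (n - 2*i).factorial = n.factorial * 2^(n - 2*i) := by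
  intro n
  induction n with
  | zero => intro i hi; have : i = 0 := by omega
            subst this; simp [stmtA]
  | succ n ih =>
    intro i hi
    match i with
    | 0 =>
      have h0 := ih 0 (by omega)
      simp only [Nat.mul_zero, Nat.sub_zero] at h0 ⊢
      show 2 * stmtA n 0 * Nat.factorial 0 * (n+1).factorial = _
      rw [Nat.factorial_succ]
      simp only [Nat.factorial_zero, Nat.mul_one] at h0 ⊢
      rw [pow_succ]
      calc 2 * stmtA n 0 * ((n+1) * n.factorial) = (n+1) * (stmtA n 0 * n.factorial) * 2 := by ring
        _ = (n+1) * (n.factorial * 2^n) * 2 := by rw [h0]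
        _ = (n+1) * n.factorial * (2^n * 2) := by ring
    | i+1 =>
      show (2 * stmtA n (i+1) + (n - 2*i) * stmtA n i) * (i+1).factorial * (n + 1 - 2*(i+1)).factorial = _
      rcases Nat.lt_or_ge n (2*(i+1)) with hlt | hge
      · -- n = 2i+1 (odd case), since 2(i+1) ≤ n+1 and n < 2i+2 means n = 2i+1
        have hn : n = 2*i+1 := by omega
        subst hn
        have h1 : stmtA (2*i+1) (i+1) = 0 := stmtA_zero _ _ (by omega)
        have h2 := ih i (by omega)
        have e1 : 2*i+1 - 2*i = 1 := by omega
        rw [e1] at h2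
        have e2 : 2*i+1 + 1 - 2*(i+1) = 0 := by omega
        rw [h1, e2]
        simp only [Nat.factorial_zero, Nat.factorial_one, Nat.mul_one, pow_zero, pow_one] at h2 ⊢
        rw [Nat.factorial_succ (i), Nat.factorial_succ (2*i+1)]
        calc (2 * 0 + (2*i+1 - 2*i) * stmtA (2*i+1) i) * ((i+1) * i.factorial)
            = (i+1) * (stmtA (2*i+1) i * i.factorial) := by rw [e1]; ring
          _ = (i+1) * ((2*i+1).factorial * 2) := by rw [h2]
          _ = (2*i+1+1) * (2*i+1).factorial := by ring
      · -- general case: 2(i+1) ≤ n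
        set m := n - 2*(i+1) with hm
        have hn2 : n - 2*i = m + 2 := by omega
        have hn1 : n + 1 - 2*(i+1) = m + 1 := by omega
        have h1 := ih (i+1) hge
        have h2 := ih i (by omega)
        rw [hn2] at h2
        rw [← hm] at h1
        rw [hn1, hn2]
        -- multiply both sides by (m+2) and cancel
        apply Nat.eq_of_mul_eq_mul_left (show 0 < m + 2 by omega)
        have hf2 : (m+2).factorial = (m+2) * (m+1).factorial := Nat.factorial_succ (m+1)
        have hfi : (i+1).factorial = (i+1) * i.factorial := Nat.factorial_succ i
        have hfn : (n+1).factorial = (n+1) * n.factorial := Nat.factorial_succ n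
        have hne : n + 1 = m + 2*i + 3 := by omega
        calc (m+2) * ((2 * stmtA n (i+1) + (m+2) * stmtA n i) * (i+1).factorial * (m+1).factorial)
            = 2*(m+2)*(m+1) * (stmtA n (i+1) * (i+1).factorial * m.factorial)
              + (i+1) * ((m+2) * stmtA n i * i.factorial * ((m+2)*(m+1).factorial)) := by
              rw [hfi, Nat.factorial_succ m]; ring
          _ = 2*(m+2)*(m+1) * (n.factorial * 2^m)
              + (i+1) * ((m+2) * (stmtA n i * i.factorial * (m+2).factorial)) := by
              rw [h1, hf2]; ring
          _ = 2*(m+2)*(m+1) * (n.factorial * 2^m) + (i+1) * ((m+2) * (n.factorial * 2^(m+2))) := by rw [h2]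
          _ = (m+2) * ((n+1).factorial * 2^(m+1)) := by
              rw [hfn, hne, pow_succ, pow_succ]; ring

lemma stmt_line {d : ℕ} (w : Fin d → ℝ) :
    ∀ (n : ℕ) (F : (Fin d → ℝ) → ℝ), ContDiff ℝ (⊤ : ℕ∞) F → ∀ x : Fin d → ℝ,
      iteratedDeriv n (fun s : ℝ => F (x + s • w)) 0 =
      iteratedFDeriv ℝ n F x (fun _ => w) := by
  intro n
  induction n with
  | zero => intro F hF x; simp
  | succ n ih =>
    intro F hF x
    rw [iteratedDeriv_succ']
    have hder : (deriv fun s : ℝ => F (x + s • w)) =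
        fun s : ℝ => fderiv ℝ F (x + s • w) w := by
      funext s
      have hc : HasDerivAt (fun s : ℝ => x + s • w) w s := by
        simpa using ((hasDerivAt_id s).smul_const w).const_add x
      have hFd : HasFDerivAt F (fderiv ℝ F (x + s • w)) (x + s • w) :=
        (hF.differentiable (by simp) (x + s • w)).hasFDerivAt
      exact (hFd.comp_hasDerivAt s hc).deriv
    rw [hder]
    have hG : ContDiff ℝ (⊤ : ℕ∞) (fun y => fderiv ℝ F y w) :=
      (hF.fderiv_right (by exact_mod_cast le_top)).clm_apply contDiff_const
    rw [ih _ hG x]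
    have hfd : ContDiff ℝ (⊤ : ℕ∞) (fderiv ℝ F) :=
      hF.fderiv_right (by exact_mod_cast le_top)
    have hGL : (fun y => fderiv ℝ F y w) =
        (ContinuousLinearMap.apply ℝ ℝ w) ∘ (fderiv ℝ F) := rfl
    rw [hGL, (ContinuousLinearMap.apply ℝ ℝ w).iteratedFDeriv_comp_left
      hfd.contDiffAt (by exact_mod_cast le_top)]
    rw [iteratedFDeriv_succ_apply_right]
    rfl



noncomputable def stmtB (h : ℝ → ℝ) (n : ℕ) (s : ℝ) (i : ℕ) : ℝ :=
  2 * (stmtA n i : ℝ) * s^(n+1-2*i) * iteratedDeriv (n+1-i) h (s^2)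

noncomputable def stmtC (h : ℝ → ℝ) (n : ℕ) (s : ℝ) : ℕ → ℝ
  | 0 => 0
  | j+1 => (((n - 2*j) * stmtA n j : ℕ) : ℝ) * s^(n+1-2*(j+1)) *
      iteratedDeriv (n+1-(j+1)) h (s^2)

lemma stmt_sum (h : ℝ → ℝ) (hh : ContDiff ℝ (⊤ : ℕ∞) h) :
    ∀ (n : ℕ) (s : ℝ), iteratedDeriv n (fun t : ℝ => h (t^2)) s =
      ∑ i ∈ Finset.range (n+1),
        (stmtA n i : ℝ) * s^(n - 2*i) * iteratedDeriv (n - i) h (s^2) := by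
  intro n
  induction n with
  | zero => intro s; simp [stmtA]
  | succ n ih =>
    intro s
    rw [iteratedDeriv_succ]
    have hfun : iteratedDeriv n (fun t : ℝ => h (t^2)) =
        fun s => ∑ i ∈ Finset.range (n+1),
          (stmtA n i : ℝ) * s^(n - 2*i) * iteratedDeriv (n - i) h (s^2) := funext ih
    rw [hfun]
    have key : ∀ i : ℕ, HasDerivAt
        (fun t : ℝ => (stmtA n i : ℝ) * t^(n-2*i) * iteratedDeriv (n-i) h (t^2))
        ((stmtA n i : ℝ) * (((n-2*i : ℕ) : ℝ) * s^(n-2*i-1)) * iteratedDeriv (n-i) h (s^2)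
          + (stmtA n i : ℝ) * s^(n-2*i) * (iteratedDeriv (n-i+1) h (s^2) * (2*s))) s := by
      intro i
      have h1 : HasDerivAt (fun t : ℝ => t^(n-2*i)) (((n-2*i : ℕ) : ℝ) * s^(n-2*i-1)) s :=
        hasDerivAt_pow _ s
      have hsq : HasDerivAt (fun t : ℝ => t^2) (2*s) s := by
        simpa using hasDerivAt_pow 2 s
      have hd : DifferentiableAt ℝ (iteratedDeriv (n-i) h) (s^2) :=
        (hh.differentiable_iteratedDeriv _ (ENat.natCast_lt_of_coe_top_le_withTop le_rfl (n - i))) (s^2)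
      have hH : HasDerivAt (iteratedDeriv (n-i) h) (iteratedDeriv (n-i+1) h (s^2)) (s^2) := by
        rw [iteratedDeriv_succ]
        exact hd.hasDerivAt
      have h2 := HasDerivAt.comp (h := fun t : ℝ => t^2)
        (h₂ := iteratedDeriv (n-i) h) s hH hsq
      exact (h1.const_mul _).mul h2
    have hsum := HasDerivAt.fun_sum (fun i (_ : i ∈ Finset.range (n+1)) => key i)
    rw [hsum.deriv]
    -- now pure algebra
    have hRHS : ∑ i ∈ Finset.range (n+1+1),
          (stmtA (n+1) i : ℝ) * s^(n+1 - 2*i) * iteratedDeriv (n+1 - i) h (s^2)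
        = ∑ i ∈ Finset.range (n+1), stmtB h n s i
          + ∑ i ∈ Finset.range (n+1), stmtC h n s (i+1) := by
      calc ∑ i ∈ Finset.range (n+1+1),
            (stmtA (n+1) i : ℝ) * s^(n+1 - 2*i) * iteratedDeriv (n+1 - i) h (s^2)
          = ∑ i ∈ Finset.range (n+1+1), (stmtB h n s i + stmtC h n s i) := by
            refine Finset.sum_congr rfl fun i _ => ?_
            match i with
            | 0 =>
              show (↑(2 * stmtA n 0) : ℝ) * _ * _ = _
              simp only [stmtB, stmtC]
              push_cast
              ring
            | j+1 =>
              show (↑(2 * stmtA n (j+1) + (n - 2*j) * stmtA n j) : ℝ) * _ * _ = _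
              simp only [stmtB, stmtC]
              push_cast
              ring
        _ = ∑ i ∈ Finset.range (n+1+1), stmtB h n s i
            + ∑ i ∈ Finset.range (n+1+1), stmtC h n s i := Finset.sum_add_distrib
        _ = _ := by
            rw [Finset.sum_range_succ (stmtB h n s), Finset.sum_range_succ' (stmtC h n s)]
            have hB0 : stmtB h n s (n+1) = 0 := by
              simp [stmtB, stmtA_zero n (n+1) (by omega)]
            rw [hB0, stmtC]
            ring
    rw [hRHS]
    rw [Finset.sum_add_distrib]
    have e1 : ∀ i ∈ Finset.range (n+1),
        (stmtA n i : ℝ) * (((n-2*i : ℕ) : ℝ) * s^(n-2*i-1)) * iteratedDeriv (n-i) h (s^2)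
          = stmtC h n s (i+1) := by
      intro i _
      show _ = (((n - 2*i) * stmtA n i : ℕ) : ℝ) * s^(n+1-2*(i+1)) *
          iteratedDeriv (n+1-(i+1)) h (s^2)
      have e : n+1-2*(i+1) = n-2*i-1 := by omega
      have e' : n+1-(i+1) = n-i := by omega
      rw [e, e']
      push_cast
      ring
    have e2 : ∀ i ∈ Finset.range (n+1),
        (stmtA n i : ℝ) * s^(n-2*i) * (iteratedDeriv (n-i+1) h (s^2) * (2*s))
          = stmtB h n s i := by
      intro i hi
      have hin : i ≤ n := by simpa using Nat.lt_succ_iff.mp (Finset.mem_range.mp hi)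
      by_cases hle : 2*i ≤ n
      · have e : n+1-2*i = (n-2*i)+1 := by omega
        have e' : n+1-i = n-i+1 := by omega
        rw [stmtB, e, e', pow_succ]
        ring
      · have hz : stmtA n i = 0 := stmtA_zero n i (by omega)
        simp [stmtB, hz]
    rw [Finset.sum_congr rfl e1, Finset.sum_congr rfl e2]
    ring

theorem stmt13 {d : ℕ} (F : (Fin d → ℝ) → ℝ) (hF : ContDiff ℝ (⊤ : ℕ∞) F)
    (x v : Fin d → ℝ) (lam : ℝ) (k : ℕ) :
    iteratedDeriv (2*k) (fun s : ℝ => F (x + (s^2 * lam) • v)) 0 =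
      ((Nat.factorial (2*k) : ℝ) / (Nat.factorial k : ℝ)) * lam^k *
        iteratedFDeriv ℝ k F x (fun _ => v) := by
  set w : Fin d → ℝ := lam • v with hw
  have hg : (fun s : ℝ => F (x + (s^2 * lam) • v)) =
      fun s : ℝ => (fun u : ℝ => F (x + u • w)) (s^2) := by
    funext s
    simp only [hw, smul_smul]
  have hh : ContDiff ℝ (⊤ : ℕ∞) (fun u : ℝ => F (x + u • w)) :=
    hF.comp (contDiff_const.add (contDiff_id.smul contDiff_const))
  rw [hg, stmt_sum _ hh (2*k) 0]
  have hsingle : ∑ i ∈ Finset.range (2*k+1),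
        (stmtA (2*k) i : ℝ) * (0:ℝ)^(2*k - 2*i) *
          iteratedDeriv (2*k - i) (fun u : ℝ => F (x + u • w)) ((0:ℝ)^2)
      = (stmtA (2*k) k : ℝ) * iteratedDeriv k (fun u : ℝ => F (x + u • w)) 0 := by
    rw [Finset.sum_eq_single k]
    · have e1 : 2*k - 2*k = 0 := by omega
      have e2 : 2*k - k = k := by omega
      rw [e1, e2]
      norm_num
    · intro i hi hne
      rcases lt_or_gt_of_ne hne with hlt | hgt
      · have : (0:ℝ)^(2*k - 2*i) = 0 := zero_pow (by omega)
        rw [this]; ring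
      · rw [stmtA_zero _ _ (by omega)]
        push_cast; ring
    · intro hk
      exact absurd (Finset.mem_range.mpr (by omega)) hk
  rw [hsingle, stmt_line w k F hF x]
  have hmulti : (iteratedFDeriv ℝ k F x fun _ => w)
      = lam^k * iteratedFDeriv ℝ k F x (fun _ => v) := by
    have := (iteratedFDeriv ℝ k F x).map_smul_univ (fun _ => lam) (fun _ => v)
    simp only [Finset.prod_const, Finset.card_univ, Fintype.card_fin, smul_eq_mul] at this
    simpa [hw] using this
  rw [hmulti]
  have hAk : (stmtA (2*k) k : ℝ) = (Nat.factorial (2*k) : ℝ) / (Nat.factorial k : ℝ) := by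
    have h1 := stmtA_fact (2*k) k (le_refl _)
    have e : 2*k - 2*k = 0 := by omega
    rw [e] at h1
    simp only [Nat.factorial_zero, Nat.mul_one, pow_zero] at h1
    have hk0 : (Nat.factorial k : ℝ) ≠ 0 := by positivity
    field_simp
    exact_mod_cast h1
  rw [hAk]
  ring
end
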